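/- arXiv:2602.17950 — 3 statements merged into one kernel-verified Lean document; each statement's English description precedes it below -/
import Mathlib

section
/- (Virial identity) Let Φ_g = (φ₁^g, φ₀^g, φ₋₁^g)ᵀ ∈ M be a ground state of the rotating spin-orbit coupled spin-1 BEC with harmonic potential V. Then 2E_kin(Φ_g) − 2E_pot(Φ_g) + d·E_spin(Φ_g) + E_soc(Φ_g) = 0 for d = 2, 3. -/
open MeasureTheory Complex

noncomputable section

abbrev Pt (d : ℕ) := EuclideanSpace ℝ (Fin d)

/-- Classical partial derivative `∂_j f`, junk `0` if `j ≥ d`. -/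
def pdC (d : ℕ) (f : Pt d → ℂ) (j : ℕ) (x : Pt d) : ℂ :=
  if h : j < d then fderiv ℝ f x (EuclideanSpace.single ⟨j, h⟩ 1) else 0

def nthC (d : ℕ) (x : Pt d) (j : ℕ) : ℝ := if h : j < d then x ⟨j, h⟩ else 0

/-- `L₀ = i∂ₓ + ∂_y`. -/
def L0op (d : ℕ) (f : Pt d → ℂ) (x : Pt d) : ℂ := Complex.I * pdC d f 0 x + pdC d f 1 x

/-- `L₁ = i∂ₓ − ∂_y`. -/
def L1op (d : ℕ) (f : Pt d → ℂ) (x : Pt d) : ℂ := Complex.I * pdC d f 0 x - pdC d f 1 x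

/-- Rotation operator `L_z = −i(x∂_y − y∂ₓ)`. -/
def Lzop (d : ℕ) (f : Pt d → ℂ) (x : Pt d) : ℂ :=
  -Complex.I * (((nthC d x 0 : ℝ) : ℂ) * pdC d f 1 x - ((nthC d x 1 : ℝ) : ℂ) * pdC d f 0 x)

/-- `|∇f|²`. -/
def gradsq (d : ℕ) (f : Pt d → ℂ) (x : Pt d) : ℝ := ∑ j : Fin d, ‖pdC d f j x‖ ^ 2

/-- Total density `ρ = |φ₁|² + |φ₀|² + |φ₋₁|²`. -/
def rho (d : ℕ) (φ1 φ0 φm1 : Pt d → ℂ) (x : Pt d) : ℝ :=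
  ‖φ1 x‖ ^ 2 + ‖φ0 x‖ ^ 2 + ‖φm1 x‖ ^ 2

/-- Spin vector magnitude squared `|F|²`. -/
def Fsq (d : ℕ) (φ1 φ0 φm1 : Pt d → ℂ) (x : Pt d) : ℝ :=
  2 * ((((starRingEnd ℂ) (φ1 x) + (starRingEnd ℂ) (φm1 x)) * φ0 x).re) ^ 2
    + 2 * ((φ0 x * ((starRingEnd ℂ) (φm1 x) - (starRingEnd ℂ) (φ1 x))).im) ^ 2
    + (‖φ1 x‖ ^ 2 - ‖φm1 x‖ ^ 2) ^ 2

/-- The (real) SOC integrand `Φ†SΦ = φ̄₁L₀φ₀ + φ̄₀(L₀φ₋₁ + L₁φ₁) + φ̄₋₁L₁φ₀`. -/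
def socDen (d : ℕ) (φ1 φ0 φm1 : Pt d → ℂ) (x : Pt d) : ℝ :=
  ((starRingEnd ℂ) (φ1 x) * L0op d φ0 x
    + (starRingEnd ℂ) (φ0 x) * (L0op d φm1 x + L1op d φ1 x)
    + (starRingEnd ℂ) (φm1 x) * L1op d φ0 x).re

/-- The (real) rotation integrand `φ̄ L_z φ`. -/
def rotDen (d : ℕ) (φ : Pt d → ℂ) (x : Pt d) : ℝ :=
  ((starRingEnd ℂ) (φ x) * Lzop d φ x).re

/-- Kinetic energy. -/
def Ekin (d : ℕ) (φ1 φ0 φm1 : Pt d → ℂ) : ℝ :=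
  (1 / 2 : ℝ) * ∫ x, (gradsq d φ1 x + gradsq d φ0 x + gradsq d φm1 x)

/-- Potential energy. -/
def Epot (d : ℕ) (V : Pt d → ℝ) (φ1 φ0 φm1 : Pt d → ℂ) : ℝ :=
  ∫ x, V x * rho d φ1 φ0 φm1 x

/-- Interaction (spin) energy. -/
def Espin (d : ℕ) (c0 c1 : ℝ) (φ1 φ0 φm1 : Pt d → ℂ) : ℝ :=
  ∫ x, (c0 / 2 * (rho d φ1 φ0 φm1 x) ^ 2 + c1 / 2 * Fsq d φ1 φ0 φm1 x)

/-- Rotation energy. -/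
def Erot (d : ℕ) (Ω : ℝ) (φ1 φ0 φm1 : Pt d → ℂ) : ℝ :=
  -Ω * ∫ x, (rotDen d φ1 x + rotDen d φ0 x + rotDen d φm1 x)

/-- Spin-orbit coupling energy. -/
def Esoc (d : ℕ) (γ : ℝ) (φ1 φ0 φm1 : Pt d → ℂ) : ℝ :=
  -γ * ∫ x, socDen d φ1 φ0 φm1 x

/-- Total energy of the rotating SOC spin-1 BEC. -/
def Etot (d : ℕ) (V : Pt d → ℝ) (c0 c1 Ω γ : ℝ) (φ1 φ0 φm1 : Pt d → ℂ) : ℝ :=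
  Ekin d φ1 φ0 φm1 + Epot d V φ1 φ0 φm1 + Espin d c0 c1 φ1 φ0 φm1
    + Erot d Ω φ1 φ0 φm1 + Esoc d γ φ1 φ0 φm1

/-- The constraint manifold `M`: triples in `H¹ ∩ L²_V` (with all energy integrands
integrable) of unit total mass. -/
def InM (d : ℕ) (V : Pt d → ℝ) (φ1 φ0 φm1 : Pt d → ℂ) : Prop :=
  Differentiable ℝ φ1 ∧ Differentiable ℝ φ0 ∧ Differentiable ℝ φm1 ∧
  Integrable (fun x => rho d φ1 φ0 φm1 x) ∧
  Integrable (fun x => gradsq d φ1 x + gradsq d φ0 x + gradsq d φm1 x) ∧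
  Integrable (fun x => V x * rho d φ1 φ0 φm1 x) ∧
  Integrable (fun x => (rho d φ1 φ0 φm1 x) ^ 2) ∧
  Integrable (fun x => Fsq d φ1 φ0 φm1 x) ∧
  Integrable (fun x => rotDen d φ1 x + rotDen d φ0 x + rotDen d φm1 x) ∧
  Integrable (fun x => socDen d φ1 φ0 φm1 x) ∧
  (∫ x, rho d φ1 φ0 φm1 x) = 1



/-!
A ground state minimises the energy along the mass-preserving dilations
`t ↦ t^{d/2} Φ_g(t x)`, `t > 0`. Along them `E_kin` scales as `t²`, `E_pot` as `t⁻²`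
(the harmonic potential is homogeneous of degree 2), `E_spin` as `t^d`, `E_soc` as `t`
(it carries one derivative), and `E_rot` is invariant (`L_z` commutes with dilations).
The derivative at `t = 1` of this function of `t` must vanish, which is the virial identity.
-/

section ChangeOfVariables

variable {d : ℕ} {f g : Pt d → ℝ} {c t : ℝ}

theorem integral_eq_of_eq_mul_comp_smul (ht : 0 < t) (h : ∀ x, g x = c * f (t • x)) :
    ∫ x, g x = c / t ^ d * ∫ x, f x := by
  simp only [h, integral_const_mul, finrank_euclideanSpace_fin, smul_eq_mul,
    Measure.integral_comp_smul_of_nonneg volume f t (hR := ht.le)]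
  ring

theorem Integrable.of_eq_mul_comp_smul (ht : t ≠ 0) (hf : Integrable f)
    (h : ∀ x, g x = c * f (t • x)) : Integrable g := by
  simp only [funext h]
  exact (hf.comp_smul ht).const_mul c

end ChangeOfVariables

theorem harmonic_potential_smul {d : ℕ} {γv : Fin d → ℝ} {V : Pt d → ℝ}
    (hV : ∀ x, V x = 1 / 2 * ∑ j : Fin d, (γv j) ^ 2 * (x j) ^ 2) (t : ℝ) (x : Pt d) :
    V (t • x) = t ^ 2 * V x := by
  simp only [hV, PiLp.smul_apply, smul_eq_mul, Finset.mul_sum]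
  exact Finset.sum_congr rfl fun j _ => by ring

def rescale (d : ℕ) (a t : ℝ) (φ : Pt d → ℂ) : Pt d → ℂ := fun y => (a : ℂ) * φ (t • y)

section Rescale

variable {d : ℕ} {a t : ℝ} {φ φ1 φ0 φm1 : Pt d → ℂ}

theorem Differentiable.rescale (hφ : Differentiable ℝ φ) :
    Differentiable ℝ (rescale d a t φ) :=
  (hφ.comp (differentiable_id.const_smul t)).const_mul _

theorem pdC_rescale (hφ : Differentiable ℝ φ) (j : ℕ) (x : Pt d) :
    pdC d (rescale d a t φ) j x = a * t * pdC d φ j (t • x) := by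
  unfold pdC
  split
  · have hcomp : HasFDerivAt (rescale d a t φ)
        ((a : ℂ) • (fderiv ℝ φ (t • x)).comp (t • ContinuousLinearMap.id ℝ (Pt d))) x :=
      (((hφ (t • x)).hasFDerivAt).comp x ((hasFDerivAt_id x).const_smul t)).const_mul (a : ℂ)
    simp only [hcomp.fderiv, ContinuousLinearMap.comp_smulₛₗ, Real.ringHom_apply,
      ContinuousLinearMap.comp_id, smul_apply, real_smul, smul_eq_mul]
    ring
  · ring

theorem nthC_smul (x : Pt d) (j : ℕ) : nthC d (t • x) j = t * nthC d x j := by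
  unfold nthC
  split
  · rfl
  · ring

theorem gradsq_rescale (hφ : Differentiable ℝ φ) (x : Pt d) :
    gradsq d (rescale d a t φ) x = a ^ 2 * t ^ 2 * gradsq d φ (t • x) := by
  simp only [gradsq, pdC_rescale hφ, Finset.mul_sum, norm_mul, mul_pow, Complex.norm_real,
    Real.norm_eq_abs, sq_abs]

theorem rho_rescale (x : Pt d) :
    rho d (rescale d a t φ1) (rescale d a t φ0) (rescale d a t φm1) x
      = a ^ 2 * rho d φ1 φ0 φm1 (t • x) := by
  simp only [rho, rescale, norm_mul, Complex.norm_real, Real.norm_eq_abs, mul_pow, sq_abs]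
  ring

theorem Fsq_rescale (x : Pt d) :
    Fsq d (rescale d a t φ1) (rescale d a t φ0) (rescale d a t φm1) x
      = a ^ 4 * Fsq d φ1 φ0 φm1 (t • x) := by
  simp only [Fsq, rescale, map_mul, Complex.conj_ofReal]
  rw [show ∀ z1 z0 zm : ℂ, ((a : ℂ) * z1 + (a : ℂ) * zm) * ((a : ℂ) * z0)
      = ((a ^ 2 : ℝ) : ℂ) * ((z1 + zm) * z0) by intros; push_cast; ring,
    show ∀ z1 z0 zm : ℂ, ((a : ℂ) * z0) * ((a : ℂ) * zm - (a : ℂ) * z1)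
      = ((a ^ 2 : ℝ) : ℂ) * (z0 * (zm - z1)) by intros; push_cast; ring,
    Complex.re_ofReal_mul, Complex.im_ofReal_mul]
  simp only [norm_mul, Complex.norm_real, Real.norm_eq_abs, mul_pow, sq_abs]
  ring

theorem L0op_rescale (hφ : Differentiable ℝ φ) (x : Pt d) :
    L0op d (rescale d a t φ) x = a * t * L0op d φ (t • x) := by
  simp only [L0op, pdC_rescale hφ]
  ring

theorem L1op_rescale (hφ : Differentiable ℝ φ) (x : Pt d) :
    L1op d (rescale d a t φ) x = a * t * L1op d φ (t • x) := by
  simp only [L1op, pdC_rescale hφ]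
  ring

theorem socDen_rescale (h1 : Differentiable ℝ φ1) (h0 : Differentiable ℝ φ0)
    (hm : Differentiable ℝ φm1) (x : Pt d) :
    socDen d (rescale d a t φ1) (rescale d a t φ0) (rescale d a t φm1) x
      = a ^ 2 * t * socDen d φ1 φ0 φm1 (t • x) := by
  simp only [socDen, L0op_rescale h0, L0op_rescale hm, L1op_rescale h1, L1op_rescale h0]
  rw [← Complex.re_ofReal_mul]
  congr 1
  simp only [rescale, map_mul, Complex.conj_ofReal]
  push_cast
  ring

theorem rotDen_rescale (hφ : Differentiable ℝ φ) (x : Pt d) :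
    rotDen d (rescale d a t φ) x = a ^ 2 * rotDen d φ (t • x) := by
  simp only [rotDen, Lzop, pdC_rescale hφ, nthC_smul]
  rw [← Complex.re_ofReal_mul]
  congr 1
  simp only [rescale, map_mul, Complex.conj_ofReal]
  push_cast
  ring

theorem kinDen_rescale (h1 : Differentiable ℝ φ1) (h0 : Differentiable ℝ φ0)
    (hm : Differentiable ℝ φm1) (x : Pt d) :
    gradsq d (rescale d a t φ1) x + gradsq d (rescale d a t φ0) x
        + gradsq d (rescale d a t φm1) x
      = a ^ 2 * t ^ 2 * (gradsq d φ1 (t • x) + gradsq d φ0 (t • x) + gradsq d φm1 (t • x)) := by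
  simp only [gradsq_rescale h1, gradsq_rescale h0, gradsq_rescale hm]
  ring

theorem potDen_rescale {V : Pt d → ℝ} (hV : ∀ y, V (t • y) = t ^ 2 * V y) (ht : t ≠ 0)
    (x : Pt d) :
    V x * rho d (rescale d a t φ1) (rescale d a t φ0) (rescale d a t φm1) x
      = a ^ 2 / t ^ 2 * (V (t • x) * rho d φ1 φ0 φm1 (t • x)) := by
  rw [rho_rescale, hV]
  field_simp

theorem rho_sq_rescale (x : Pt d) :
    rho d (rescale d a t φ1) (rescale d a t φ0) (rescale d a t φm1) x ^ 2
      = a ^ 4 * rho d φ1 φ0 φm1 (t • x) ^ 2 := by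
  rw [rho_rescale]
  ring

theorem spinDen_rescale (c0 c1 : ℝ) (x : Pt d) :
    c0 / 2 * rho d (rescale d a t φ1) (rescale d a t φ0) (rescale d a t φm1) x ^ 2
        + c1 / 2 * Fsq d (rescale d a t φ1) (rescale d a t φ0) (rescale d a t φm1) x
      = a ^ 4 * (c0 / 2 * rho d φ1 φ0 φm1 (t • x) ^ 2 + c1 / 2 * Fsq d φ1 φ0 φm1 (t • x)) := by
  rw [rho_sq_rescale, Fsq_rescale]
  ring

theorem rotDen_add_rescale (h1 : Differentiable ℝ φ1) (h0 : Differentiable ℝ φ0)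
    (hm : Differentiable ℝ φm1) (x : Pt d) :
    rotDen d (rescale d a t φ1) x + rotDen d (rescale d a t φ0) x
        + rotDen d (rescale d a t φm1) x
      = a ^ 2 * (rotDen d φ1 (t • x) + rotDen d φ0 (t • x) + rotDen d φm1 (t • x)) := by
  simp only [rotDen_rescale h1, rotDen_rescale h0, rotDen_rescale hm]
  ring

theorem Ekin_rescale (ht : 0 < t) (h1 : Differentiable ℝ φ1) (h0 : Differentiable ℝ φ0)
    (hm : Differentiable ℝ φm1) :
    Ekin d (rescale d a t φ1) (rescale d a t φ0) (rescale d a t φm1)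
      = a ^ 2 * t ^ 2 / t ^ d * Ekin d φ1 φ0 φm1 := by
  rw [Ekin, Ekin, integral_eq_of_eq_mul_comp_smul
    (f := fun x => gradsq d φ1 x + gradsq d φ0 x + gradsq d φm1 x) ht (kinDen_rescale h1 h0 hm)]
  ring

theorem Epot_rescale {V : Pt d → ℝ} (hV : ∀ y, V (t • y) = t ^ 2 * V y) (ht : 0 < t) :
    Epot d V (rescale d a t φ1) (rescale d a t φ0) (rescale d a t φm1)
      = a ^ 2 / t ^ 2 / t ^ d * Epot d V φ1 φ0 φm1 := by
  rw [Epot, Epot, integral_eq_of_eq_mul_comp_smul (f := fun x => V x * rho d φ1 φ0 φm1 x) ht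
    (potDen_rescale hV ht.ne')]

theorem Espin_rescale (ht : 0 < t) (c0 c1 : ℝ) :
    Espin d c0 c1 (rescale d a t φ1) (rescale d a t φ0) (rescale d a t φm1)
      = a ^ 4 / t ^ d * Espin d c0 c1 φ1 φ0 φm1 := by
  rw [Espin, Espin, integral_eq_of_eq_mul_comp_smul
    (f := fun x => c0 / 2 * rho d φ1 φ0 φm1 x ^ 2 + c1 / 2 * Fsq d φ1 φ0 φm1 x) ht
    (spinDen_rescale c0 c1)]

theorem Erot_rescale (ht : 0 < t) (h1 : Differentiable ℝ φ1) (h0 : Differentiable ℝ φ0)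
    (hm : Differentiable ℝ φm1) (Ω : ℝ) :
    Erot d Ω (rescale d a t φ1) (rescale d a t φ0) (rescale d a t φm1)
      = a ^ 2 / t ^ d * Erot d Ω φ1 φ0 φm1 := by
  rw [Erot, Erot, integral_eq_of_eq_mul_comp_smul
    (f := fun x => rotDen d φ1 x + rotDen d φ0 x + rotDen d φm1 x) ht
    (rotDen_add_rescale h1 h0 hm)]
  ring

theorem Esoc_rescale (ht : 0 < t) (h1 : Differentiable ℝ φ1) (h0 : Differentiable ℝ φ0)
    (hm : Differentiable ℝ φm1) (γ : ℝ) :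
    Esoc d γ (rescale d a t φ1) (rescale d a t φ0) (rescale d a t φm1)
      = a ^ 2 * t / t ^ d * Esoc d γ φ1 φ0 φm1 := by
  rw [Esoc, Esoc, integral_eq_of_eq_mul_comp_smul ht (socDen_rescale h1 h0 hm)]
  ring

end Rescale

section Dilation

variable {d : ℕ} {t : ℝ} {V : Pt d → ℝ} {φ1 φ0 φm1 : Pt d → ℂ}

theorem InM.dilation (hV : ∀ y, V (t • y) = t ^ 2 * V y) (ht : 0 < t)
    (hφ : InM d V φ1 φ0 φm1) :
    InM d V (rescale d √(t ^ d) t φ1) (rescale d √(t ^ d) t φ0) (rescale d √(t ^ d) t φm1) := by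
  obtain ⟨h1, h0, hm, hρ, hK, hP, hρ2, hF, hR, hC, hmass⟩ := hφ
  have ht0 := ht.ne'
  refine ⟨h1.rescale, h0.rescale, hm.rescale,
    Integrable.of_eq_mul_comp_smul ht0 hρ rho_rescale,
    Integrable.of_eq_mul_comp_smul ht0 hK (kinDen_rescale h1 h0 hm),
    Integrable.of_eq_mul_comp_smul ht0 hP (potDen_rescale hV ht0),
    Integrable.of_eq_mul_comp_smul ht0 hρ2 rho_sq_rescale,
    Integrable.of_eq_mul_comp_smul ht0 hF Fsq_rescale,
    Integrable.of_eq_mul_comp_smul ht0 hR (rotDen_add_rescale h1 h0 hm),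
    Integrable.of_eq_mul_comp_smul ht0 hC (socDen_rescale h1 h0 hm), ?_⟩
  rw [integral_eq_of_eq_mul_comp_smul ht rho_rescale, hmass, Real.sq_sqrt (by positivity)]
  field_simp

theorem Etot_dilation (hV : ∀ y, V (t • y) = t ^ 2 * V y) (ht : 0 < t)
    (h1 : Differentiable ℝ φ1) (h0 : Differentiable ℝ φ0) (hm : Differentiable ℝ φm1)
    (c0 c1 Ω γ : ℝ) :
    Etot d V c0 c1 Ω γ (rescale d √(t ^ d) t φ1) (rescale d √(t ^ d) t φ0)
        (rescale d √(t ^ d) t φm1)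
      = t ^ 2 * Ekin d φ1 φ0 φm1 + Epot d V φ1 φ0 φm1 / t ^ 2 + t ^ d * Espin d c0 c1 φ1 φ0 φm1
        + Erot d Ω φ1 φ0 φm1 + t * Esoc d γ φ1 φ0 φm1 := by
  rw [Etot, Ekin_rescale ht h1 h0 hm, Epot_rescale hV ht, Espin_rescale ht,
    Erot_rescale ht h1 h0 hm, Esoc_rescale ht h1 h0 hm,
    show √(t ^ d) ^ 4 = (√(t ^ d) ^ 2) ^ 2 by ring, Real.sq_sqrt (by positivity)]
  field_simp

end Dilation

theorem virial_of_le_scaling (d : ℕ) {K P S R C : ℝ}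
    (h : ∀ t : ℝ, 0 < t → K + P + S + R + C ≤ t ^ 2 * K + P / t ^ 2 + t ^ d * S + R + t * C) :
    2 * K - 2 * P + d * S + C = 0 := by
  set f : ℝ → ℝ := fun t => t ^ 2 * K + P / t ^ 2 + t ^ d * S + R + t * C
  have hmin : IsLocalMin f 1 := by
    filter_upwards [Ioi_mem_nhds one_pos] with t ht
    simpa [f] using h t ht
  have hderiv : HasDerivAt f (2 * K - 2 * P + d * S + C) 1 := by
    have hK := (hasDerivAt_pow 2 (1 : ℝ)).mul_const K
    have hP := ((hasDerivAt_pow 2 (1 : ℝ)).inv (by norm_num)).const_mul P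
    have hS := (hasDerivAt_pow d (1 : ℝ)).mul_const S
    have hC := (hasDerivAt_id (1 : ℝ)).mul_const C
    refine ((((hK.add hP).add hS).add_const R).add hC).congr_deriv (by norm_num; ring)
      |>.congr_of_eventuallyEq (Filter.Eventually.of_forall fun t => ?_)
    simp only [f, Pi.add_apply, Pi.inv_apply, id, div_eq_mul_inv]
  exact hmin.hasDerivAt_eq_zero hderiv

theorem stmt10_general (d : ℕ)
    (c0 c1 Ω γ : ℝ) (γv : Fin d → ℝ)
    (V : Pt d → ℝ) (hV : ∀ x, V x = 1 / 2 * ∑ j : Fin d, (γv j) ^ 2 * (x j) ^ 2)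
    (g1 g0 gm1 : Pt d → ℂ) (hg : InM d V g1 g0 gm1)
    (hmin : ∀ ψ1 ψ0 ψm1 : Pt d → ℂ, InM d V ψ1 ψ0 ψm1 →
      Etot d V c0 c1 Ω γ g1 g0 gm1 ≤ Etot d V c0 c1 Ω γ ψ1 ψ0 ψm1) :
    2 * Ekin d g1 g0 gm1 - 2 * Epot d V g1 g0 gm1
      + (d : ℝ) * Espin d c0 c1 g1 g0 gm1 + Esoc d γ g1 g0 gm1 = 0 := by
  refine virial_of_le_scaling d (R := Erot d Ω g1 g0 gm1) fun t ht => ?_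
  have hVt := harmonic_potential_smul hV t
  rw [← Etot_dilation hVt ht hg.1 hg.2.1 hg.2.2.1]
  exact hmin _ _ _ (hg.dilation hVt ht)

/-- Virial identity: for a ground state `Φ_g` of the rotating SOC spin-1 BEC in a
harmonic potential, `2E_kin − 2E_pot + d·E_spin + E_soc = 0` (`d = 2, 3`). -/
theorem stmt10 (d : ℕ) (hd2 : 2 ≤ d) (hd3 : d ≤ 3)
    (c0 c1 Ω γ : ℝ) (γv : Fin d → ℝ) (hγv : ∀ j, 0 < γv j)
    (V : Pt d → ℝ) (hV : ∀ x, V x = 1 / 2 * ∑ j : Fin d, (γv j) ^ 2 * (x j) ^ 2)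
    (g1 g0 gm1 : Pt d → ℂ) (hg : InM d V g1 g0 gm1)
    (hmin : ∀ ψ1 ψ0 ψm1 : Pt d → ℂ, InM d V ψ1 ψ0 ψm1 →
      Etot d V c0 c1 Ω γ g1 g0 gm1 ≤ Etot d V c0 c1 Ω γ ψ1 ψ0 ψm1) :
    2 * Ekin d g1 g0 gm1 - 2 * Epot d V g1 g0 gm1
      + (d : ℝ) * Espin d c0 c1 g1 g0 gm1 + Esoc d γ g1 g0 gm1 = 0 :=
  stmt10_general d c0 c1 Ω γ γv V hV g1 g0 gm1 hg hmin

end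
end

section
/- (Negativity of SOC energy) Suppose Φ_g ∈ M is a ground state of the rotating spin-orbit coupled spin-1 BEC with a radially symmetric trapping potential V(x) = V(|x|). Then E_soc(Φ_g) ≤ 0. -/
open MeasureTheory Complex

noncomputable section

/-- Rotation of `ℝ^d` by angle `θ` about the `z`-axis (planar rotation in the
first two coordinates). -/
def RotPt (d : ℕ) (θ : ℝ) (x : Pt d) : Pt d :=
  (WithLp.equiv 2 (∀ _ : Fin d, ℝ)).symm fun j =>
    if (j : ℕ) = 0 then Real.cos θ * nthC d x 0 - Real.sin θ * nthC d x 1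
    else if (j : ℕ) = 1 then Real.sin θ * nthC d x 0 + Real.cos θ * nthC d x 1
    else x j

/-! The point reflection `x ↦ -x` preserves the norm, hence the radial trap, and commutes with
`L_z` (both `x` and `∂` change sign), while it flips the sign of the first-order operators `L₀`,
`L₁`. So reflecting a ground state keeps it in `M` and every energy term except `E_soc`, which
changes sign: `E(Φ_g) ≤ E(Φ_g(-·)) = E(Φ_g) - 2 E_soc(Φ_g)`. In the plane this is the rotation by
`θ = π`; in `ℝ³` it is that rotation followed by `z ↦ -z`, which no energy term sees. -/

theorem fderiv_comp_neg {𝕜 E F : Type*} [NontriviallyNormedField 𝕜] [NormedAddCommGroup E]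
    [NormedSpace 𝕜 E] [NormedAddCommGroup F] [NormedSpace 𝕜 F] (f : E → F) (x : E) :
    fderiv 𝕜 (fun y => f (-y)) x = -fderiv 𝕜 f (-x) := by
  ext v
  change fderiv 𝕜 (f ∘ ContinuousLinearEquiv.neg 𝕜) x v = _
  rw [ContinuousLinearEquiv.comp_right_fderiv]
  simp

section Reflection

variable {d : ℕ}

theorem pdC_comp_neg (f : Pt d → ℂ) (j : ℕ) (x : Pt d) :
    pdC d (fun y => f (-y)) j x = -pdC d f j (-x) := by
  unfold pdC
  split_ifs <;> simp [fderiv_comp_neg]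

theorem nthC_neg (x : Pt d) (j : ℕ) : nthC d (-x) j = -nthC d x j := by
  unfold nthC
  split_ifs <;> simp

theorem L0op_comp_neg (f : Pt d → ℂ) (x : Pt d) :
    L0op d (fun y => f (-y)) x = -L0op d f (-x) := by
  simp only [L0op, pdC_comp_neg]
  ring

theorem L1op_comp_neg (f : Pt d → ℂ) (x : Pt d) :
    L1op d (fun y => f (-y)) x = -L1op d f (-x) := by
  simp only [L1op, pdC_comp_neg]
  ring

theorem Lzop_comp_neg (f : Pt d → ℂ) (x : Pt d) :
    Lzop d (fun y => f (-y)) x = Lzop d f (-x) := by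
  simp only [Lzop, pdC_comp_neg, nthC_neg, Complex.ofReal_neg]
  ring

theorem gradsq_comp_neg (f : Pt d → ℂ) (x : Pt d) :
    gradsq d (fun y => f (-y)) x = gradsq d f (-x) := by
  simp only [gradsq, pdC_comp_neg, norm_neg]

theorem rotDen_comp_neg (f : Pt d → ℂ) (x : Pt d) :
    rotDen d (fun y => f (-y)) x = rotDen d f (-x) := by
  simp only [rotDen, Lzop_comp_neg]

theorem socDen_comp_neg (φ1 φ0 φm1 : Pt d → ℂ) (x : Pt d) :
    socDen d (fun y => φ1 (-y)) (fun y => φ0 (-y)) (fun y => φm1 (-y)) x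
      = -socDen d φ1 φ0 φm1 (-x) := by
  simp only [socDen, L0op_comp_neg, L1op_comp_neg, ← Complex.neg_re]
  ring_nf

variable {φ1 φ0 φm1 : Pt d → ℂ}

theorem Ekin_comp_neg :
    Ekin d (fun y => φ1 (-y)) (fun y => φ0 (-y)) (fun y => φm1 (-y)) = Ekin d φ1 φ0 φm1 := by
  simp only [Ekin, gradsq_comp_neg]
  rw [integral_neg_eq_self (fun x => gradsq d φ1 x + gradsq d φ0 x + gradsq d φm1 x)]

theorem Epot_comp_neg {V : Pt d → ℝ} (hV : ∀ x, V (-x) = V x) :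
    Epot d V (fun y => φ1 (-y)) (fun y => φ0 (-y)) (fun y => φm1 (-y)) = Epot d V φ1 φ0 φm1 := by
  rw [Epot, Epot, ← integral_neg_eq_self (fun x => V x * rho d φ1 φ0 φm1 x)]
  simp only [hV]
  rfl

theorem Espin_comp_neg (c0 c1 : ℝ) :
    Espin d c0 c1 (fun y => φ1 (-y)) (fun y => φ0 (-y)) (fun y => φm1 (-y))
      = Espin d c0 c1 φ1 φ0 φm1 :=
  integral_neg_eq_self (fun x => c0 / 2 * rho d φ1 φ0 φm1 x ^ 2 + c1 / 2 * Fsq d φ1 φ0 φm1 x) _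

theorem Erot_comp_neg (Ω : ℝ) :
    Erot d Ω (fun y => φ1 (-y)) (fun y => φ0 (-y)) (fun y => φm1 (-y)) = Erot d Ω φ1 φ0 φm1 := by
  simp only [Erot, rotDen_comp_neg]
  rw [integral_neg_eq_self (fun x => rotDen d φ1 x + rotDen d φ0 x + rotDen d φm1 x)]

theorem Esoc_comp_neg (γ : ℝ) :
    Esoc d γ (fun y => φ1 (-y)) (fun y => φ0 (-y)) (fun y => φm1 (-y))
      = -Esoc d γ φ1 φ0 φm1 := by
  simp only [Esoc, socDen_comp_neg, integral_neg]
  rw [integral_neg_eq_self (fun x => socDen d φ1 φ0 φm1 x)]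
  ring

theorem Etot_comp_neg {V : Pt d → ℝ} (hV : ∀ x, V (-x) = V x) (c0 c1 Ω γ : ℝ) :
    Etot d V c0 c1 Ω γ (fun y => φ1 (-y)) (fun y => φ0 (-y)) (fun y => φm1 (-y))
      = Etot d V c0 c1 Ω γ φ1 φ0 φm1 - 2 * Esoc d γ φ1 φ0 φm1 := by
  rw [Etot, Etot, Ekin_comp_neg, Epot_comp_neg hV, Espin_comp_neg, Erot_comp_neg, Esoc_comp_neg]
  ring

theorem InM_comp_neg {V : Pt d → ℝ} (hV : ∀ x, V (-x) = V x) (h : InM d V φ1 φ0 φm1) :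
    InM d V (fun y => φ1 (-y)) (fun y => φ0 (-y)) (fun y => φm1 (-y)) := by
  obtain ⟨h1, h0, hm1, hrho, hgrad, hpot, hrho2, hF, hrot, hsoc, hmass⟩ := h
  simp only [InM, gradsq_comp_neg, rotDen_comp_neg, socDen_comp_neg]
  refine ⟨h1.comp differentiable_id.neg, h0.comp differentiable_id.neg,
    hm1.comp differentiable_id.neg, hrho.comp_neg, hgrad.comp_neg, ?_, hrho2.comp_neg,
    hF.comp_neg, hrot.comp_neg, hsoc.neg.comp_neg, ?_⟩
  · have hpot' := hpot.comp_neg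
    simp only [hV] at hpot'
    exact hpot'
  · exact (integral_neg_eq_self (fun x => rho d φ1 φ0 φm1 x) volume).trans hmass

end Reflection

theorem stmt12_general (d : ℕ)
    (c0 c1 Ω γ : ℝ) (V : Pt d → ℝ)
    (hrad : ∀ x y : Pt d, ‖x‖ = ‖y‖ → V x = V y)
    (g1 g0 gm1 : Pt d → ℂ) (hg : InM d V g1 g0 gm1)
    (hmin : ∀ ψ1 ψ0 ψm1 : Pt d → ℂ, InM d V ψ1 ψ0 ψm1 →
      Etot d V c0 c1 Ω γ g1 g0 gm1 ≤ Etot d V c0 c1 Ω γ ψ1 ψ0 ψm1) :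
    Esoc d γ g1 g0 gm1 ≤ 0 := by
  have hV : ∀ x, V (-x) = V x := fun x => hrad _ _ (norm_neg x)
  have hE := hmin _ _ _ (InM_comp_neg hV hg)
  rw [Etot_comp_neg hV] at hE
  linarith

/-- Negativity of the SOC energy: a ground state `Φ_g` of the rotating SOC spin-1 BEC
in a radially symmetric trap satisfies `E_soc(Φ_g) ≤ 0`. -/
theorem stmt12 (d : ℕ) (hd2 : 2 ≤ d) (hd3 : d ≤ 3)
    (c0 c1 Ω γ : ℝ) (V : Pt d → ℝ)
    (hrad : ∀ x y : Pt d, ‖x‖ = ‖y‖ → V x = V y)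
    (g1 g0 gm1 : Pt d → ℂ) (hg : InM d V g1 g0 gm1)
    (hmin : ∀ ψ1 ψ0 ψm1 : Pt d → ℂ, InM d V ψ1 ψ0 ψm1 →
      Etot d V c0 c1 Ω γ g1 g0 gm1 ≤ Etot d V c0 c1 Ω γ ψ1 ψ0 ψm1) :
    Esoc d γ g1 g0 gm1 ≤ 0 :=
  stmt12_general d c0 c1 Ω γ V hrad g1 g0 gm1 hg hmin

end
end

section
/- Let Φⁿ be on the L² unit sphere with residual rⁿ = H(Φⁿ) − μₙΦⁿ satisfying Re⟨Φⁿ, rⁿ⟩ = 0, where μₙ = Re⟨H(Φⁿ),Φⁿ⟩. Let 𝒫 be a (real-)symmetric positive definite preconditioner, Dⁿ = −𝒫rⁿ (steepest descent choice, βⁿ = 0), and Pⁿ = Dⁿ − Re⟨Dⁿ,Φⁿ⟩Φⁿ ≠ 0. Then the linearized slope coefficient bₙ = (2/‖Pⁿ‖)Re⟨Pⁿ, rⁿ + μₙΦⁿ⟩ satisfies bₙ = −(2/‖Pⁿ‖)Re⟨𝒫rⁿ, rⁿ⟩ < 0 whenever rⁿ ≠ 0. -/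
open RCLike

section TangentProjection

variable {𝕜 E : Type*} [RCLike 𝕜] [NormedAddCommGroup E] [InnerProductSpace 𝕜 E]
  [Module ℝ E] [IsScalarTower ℝ 𝕜 E]

theorem re_inner_sub_smul_left (D Φ r : E) (c : ℝ) :
    re (inner 𝕜 (D - c • Φ) r) = re (inner 𝕜 D r) - c * re (inner 𝕜 Φ r) := by
  rw [inner_sub_left, map_sub, real_smul_eq_coe_smul (K := 𝕜), inner_smul_real_left,
    real_smul_eq_coe_mul, re_ofReal_mul]

theorem re_inner_sub_re_inner_smul_self {Φ : E} (hΦ : ‖Φ‖ = 1) (D : E) :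
    re (inner 𝕜 (D - re (inner 𝕜 D Φ) • Φ) Φ) = 0 := by
  rw [re_inner_sub_smul_left, inner_self_eq_norm_sq, hΦ]
  ring

/-- `D - Re⟨D, Φ⟩ Φ` is the projection of `D` onto the tangent space of the unit sphere at `Φ`:
it is orthogonal to `Φ` and pairs with a tangent vector `r` exactly as `D` does. -/
theorem re_inner_sub_re_inner_smul_add_smul {Φ r : E} (hΦ : ‖Φ‖ = 1)
    (horth : re (inner 𝕜 Φ r) = 0) (D : E) (μ : ℝ) :
    re (inner 𝕜 (D - re (inner 𝕜 D Φ) • Φ) (r + (μ : 𝕜) • Φ)) = re (inner 𝕜 D r) := by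
  rw [inner_add_right, map_add, inner_smul_right, re_ofReal_mul,
    re_inner_sub_re_inner_smul_self hΦ, re_inner_sub_smul_left, horth]
  ring

end TangentProjection

theorem stmt17_general {H : Type*} [NormedAddCommGroup H] [InnerProductSpace ℂ H]
    (Pc : H → H)
    (hpos : ∀ u : H, u ≠ 0 → 0 < (inner ℂ (Pc u) u : ℂ).re)
    (Φ : H) (hΦ : ‖Φ‖ = 1)
    (μ : ℝ)
    (r : H) (hr0 : r ≠ 0)
    (horth : (inner ℂ Φ r : ℂ).re = 0)
    (D : H) (hD : D = -Pc r)
    (P : H) (hPdef : P = D - ((inner ℂ D Φ : ℂ).re : ℝ) • Φ) (hP : P ≠ 0)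
    (b : ℝ) (hb : b = 2 / ‖P‖ * (inner ℂ P (r + (μ : ℂ) • Φ) : ℂ).re) :
    b = -(2 / ‖P‖) * (inner ℂ (Pc r) r : ℂ).re ∧ b < 0 := by
  have hslope : (inner ℂ P (r + (μ : ℂ) • Φ) : ℂ).re = -(inner ℂ (Pc r) r : ℂ).re := by
    rw [hPdef]
    refine (re_inner_sub_re_inner_smul_add_smul (𝕜 := ℂ) hΦ horth D μ).trans ?_
    rw [hD, inner_neg_left, map_neg]
    rfl
  have hb' : b = -(2 / ‖P‖) * (inner ℂ (Pc r) r : ℂ).re := by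
    rw [hb, hslope, mul_neg, neg_mul]
  refine ⟨hb', ?_⟩
  rw [hb', neg_mul, neg_lt_zero]
  exact mul_pos (div_pos two_pos (norm_pos_iff.mpr hP)) (hpos r hr0)

/-- The preconditioned steepest descent direction is an energy descent direction:
with `r = H(Φ) − μΦ`, `μ = Re⟨H(Φ),Φ⟩`, `Pc` (the preconditioner 𝒫) symmetric positive
definite, `D = −Pc r`, `P = D − Re⟨D,Φ⟩Φ ≠ 0`, the slope coefficient
`b = (2/‖P‖)·Re⟨P, r + μΦ⟩` equals `−(2/‖P‖)·Re⟨Pc r, r⟩` and is negative if `r ≠ 0`. -/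
theorem stmt17 {H : Type*} [NormedAddCommGroup H] [InnerProductSpace ℂ H]
    (Pc : H → H)
    (hsym : ∀ u v : H, (inner ℂ (Pc u) v : ℂ).re = (inner ℂ u (Pc v) : ℂ).re)
    (hpos : ∀ u : H, u ≠ 0 → 0 < (inner ℂ (Pc u) u : ℂ).re)
    (Φ HΦ : H) (hΦ : ‖Φ‖ = 1)
    (μ : ℝ) (hμ : μ = (inner ℂ HΦ Φ : ℂ).re)
    (r : H) (hrdef : r = HΦ - (μ : ℂ) • Φ) (hr0 : r ≠ 0)
    (horth : (inner ℂ Φ r : ℂ).re = 0)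
    (D : H) (hD : D = -Pc r)
    (P : H) (hPdef : P = D - ((inner ℂ D Φ : ℂ).re : ℝ) • Φ) (hP : P ≠ 0)
    (b : ℝ) (hb : b = 2 / ‖P‖ * (inner ℂ P (r + (μ : ℂ) • Φ) : ℂ).re) :
    b = -(2 / ‖P‖) * (inner ℂ (Pc r) r : ℂ).re ∧ b < 0 :=
  stmt17_general Pc hpos Φ hΦ μ r hr0 horth D hD P hPdef hP b hb
end
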